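/- For every n ≥ 1, the probability that a random game G(2,n) is strict-dominance solvable equals π(2,n) = (2n−1)!!/(2^{n−1}·n!), which also equals 2·Γ(n+1/2)/(Γ(1/2)·Γ(n+1)). -/

import Mathlib

open Finset Filter

noncomputable section

/-- Row action `i` is strictly dominated in the restricted game with Row actions `X`
and Column actions `Y`, for Row payoff matrix `R`. -/
def RowDomIn {m n : ℕ} (R : Fin m → Fin n → ℝ) (X : Finset (Fin m)) (Y : Finset (Fin n))
    (i : Fin m) : Prop :=
  ∃ i' ∈ X, ∀ j ∈ Y, R i j < R i' j

/-- Column action `j` is strictly dominated in the restricted game with Row actions `X`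
and Column actions `Y`, for Column payoff matrix `C`. -/
def ColDomIn {m n : ℕ} (C : Fin m → Fin n → ℝ) (X : Finset (Fin m)) (Y : Finset (Fin n))
    (j : Fin n) : Prop :=
  ∃ j' ∈ Y, ∀ i ∈ X, C i j < C i j'

open Classical in
/-- One round of iterated elimination: simultaneously delete every strictly dominated
action of both players in the current restricted game. -/
def elimStep {m n : ℕ} (R C : Fin m → Fin n → ℝ)
    (p : Finset (Fin m) × Finset (Fin n)) : Finset (Fin m) × Finset (Fin n) :=
  (p.1.filter fun i => ¬ RowDomIn R p.1 p.2 i,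
   p.2.filter fun j => ¬ ColDomIn C p.1 p.2 j)

/-- Surviving actions of the subgame `(p.1, p.2)` after iterated elimination of strictly
dominated actions (iterating `m + n` times surely reaches the fixed point). -/
def survivorsFrom {m n : ℕ} (R C : Fin m → Fin n → ℝ)
    (p : Finset (Fin m) × Finset (Fin n)) : Finset (Fin m) × Finset (Fin n) :=
  (elimStep R C)^[m + n] p

/-- The subgame `(p.1, p.2)` is strict-dominance solvable: exactly one action of each
player survives iterated elimination of strictly dominated actions. -/
def SolvableFrom {m n : ℕ} (R C : Fin m → Fin n → ℝ)
    (p : Finset (Fin m) × Finset (Fin n)) : Prop :=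
  (survivorsFrom R C p).1.card = 1 ∧ (survivorsFrom R C p).2.card = 1

/-- Surviving actions of the full game after iterated elimination. -/
def survivors {m n : ℕ} (R C : Fin m → Fin n → ℝ) : Finset (Fin m) × Finset (Fin n) :=
  survivorsFrom R C (Finset.univ, Finset.univ)

/-- The game is strict-dominance solvable. -/
def Solvable {m n : ℕ} (R C : Fin m → Fin n → ℝ) : Prop :=
  SolvableFrom R C (Finset.univ, Finset.univ)

/-- The number of rounds performed by the iterated elimination procedure:
the least `k` such that round `k + 1` deletes nothing more. -/
def elimRounds {m n : ℕ} (R C : Fin m → Fin n → ℝ) : ℕ :=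
  sInf {k | (elimStep R C)^[k + 1] (Finset.univ, Finset.univ)
          = (elimStep R C)^[k] (Finset.univ, Finset.univ)}

/-- Sample space of the random game `G(m,n)`: for each Column action an i.i.d. uniform
permutation giving Row's ordinal payoffs in that column, and for each Row action an
i.i.d. uniform permutation giving Column's ordinal payoffs in that row. -/
abbrev Omega (m n : ℕ) := (Fin n → Equiv.Perm (Fin m)) × (Fin m → Equiv.Perm (Fin n))

/-- Row's payoff matrix of the realized game. -/
def RPay {m n : ℕ} (ω : Omega m n) : Fin m → Fin n → ℝ := fun i j => ((ω.1 j) i : ℕ)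

/-- Column's payoff matrix of the realized game. -/
def CPay {m n : ℕ} (ω : Omega m n) : Fin m → Fin n → ℝ := fun i j => ((ω.2 i) j : ℕ)

/-- Probability of an event under the uniform distribution on `Omega m n`
(i.e. all `m + n` permutations uniform and mutually independent). -/
def Pr {m n : ℕ} (E : Set (Omega m n)) : ℝ :=
  (E.toFinite.toFinset.card : ℝ) / (Fintype.card (Omega m n) : ℝ)

open Classical in
/-- Number of Row actions that are not strictly dominated. -/
def UR {m n : ℕ} (ω : Omega m n) : ℕ :=
  (Finset.univ.filter fun i => ¬ RowDomIn (RPay ω) Finset.univ Finset.univ i).card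

open Classical in
/-- Number of Column actions that are not strictly dominated. -/
def UC {m n : ℕ} (ω : Omega m n) : ℕ :=
  (Finset.univ.filter fun j => ¬ ColDomIn (CPay ω) Finset.univ Finset.univ j).card

/-- Number of Row actions surviving iterated elimination. -/
def SR {m n : ℕ} (ω : Omega m n) : ℕ := (survivors (RPay ω) (CPay ω)).1.card

/-- Number of Column actions surviving iterated elimination. -/
def SC {m n : ℕ} (ω : Omega m n) : ℕ := (survivors (RPay ω) (CPay ω)).2.card

/-- The realized game is strict-dominance solvable. -/
def GameSolvable {m n : ℕ} (ω : Omega m n) : Prop := Solvable (RPay ω) (CPay ω)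

/-- Number of rounds of the iterated elimination procedure in the realized game. -/
def GameRounds {m n : ℕ} (ω : Omega m n) : ℕ := elimRounds (RPay ω) (CPay ω)

/-- `π(m,n)`: probability that the random game `G(m,n)` is strict-dominance solvable. -/
def probSolvable (m n : ℕ) : ℝ := Pr {ω : Omega m n | GameSolvable ω}

/-- Expected number of Column's strictly undominated actions, `E[U^C(m,n)]`. -/
def expUC (m n : ℕ) : ℝ :=
  (∑ ω : Omega m n, (UC ω : ℝ)) / (Fintype.card (Omega m n) : ℝ)

/-- Expected number of Column actions surviving iterated elimination, `E[S^C(m,n)]`. -/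
def expSC (m n : ℕ) : ℝ :=
  (∑ ω : Omega m n, (SC ω : ℝ)) / (Fintype.card (Omega m n) : ℝ)

open Classical in
/-- `E[I(m,n)]`: expected number of elimination rounds conditional on the game being
strict-dominance solvable. -/
def condExpRounds (m n : ℕ) : ℝ :=
  (∑ ω : Omega m n, if GameSolvable ω then (GameRounds ω : ℝ) else 0) /
    (∑ ω : Omega m n, if GameSolvable ω then (1 : ℝ) else 0)

/-- Unsigned Stirling numbers of the first kind. -/
def stirling1 : ℕ → ℕ → ℕ
  | 0, 0 => 1
  | 0, _ + 1 => 0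
  | _ + 1, 0 => 0
  | n + 1, k + 1 => n * stirling1 n (k + 1) + stirling1 n k

end

/-!
With two rows, Row's payoffs in column `j` only record which row wins `j`. Column's payoff
pairs `(c₀ j, c₁ j)` are distinct in each coordinate, so the columns surviving the first round
are exactly the Pareto front `P` of these points, and no later round removes more columns until
Row is reduced to one action. Hence the game is solvable iff a single row wins every column of
`P`, which happens for `2 ^ (n - |P| + 1)` of the `2 ^ n` choices of Row's payoffs.

Ordering the columns by `c₀`, the front `P` becomes the set of right-to-left maxima of the
permutation `c₁ c₀⁻¹`. Inserting a new minimum value into a permutation of `k` letters keeps all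
its right-to-left maxima and creates a new one only when it is inserted last, so
`∑ ρ, y ^ (k - rtl ρ) = ∏ i < k, (1 + i y)`, and at `y = 2` this is `(2k - 1)!!`.
-/

namespace Equiv.Perm

variable {k : ℕ}

def rtlMaxima (ρ : Perm (Fin k)) : Finset (Fin k) :=
  {v | ∀ w, v < w → ρ w < ρ v}

def insertMin (p : Fin (k + 1)) (σ : Perm (Fin k)) : Perm (Fin (k + 1)) :=
  decomposeFin.symm (0, σ) * p.cycleRange

@[simp]
lemma insertMin_apply_self (p : Fin (k + 1)) (σ : Perm (Fin k)) : insertMin p σ p = 0 := by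
  simp [insertMin]

@[simp]
lemma insertMin_apply_succAbove (p : Fin (k + 1)) (σ : Perm (Fin k)) (x : Fin k) :
    insertMin p σ (p.succAbove x) = (σ x).succ := by
  simp [insertMin]

lemma insertMin_bijective :
    Function.Bijective fun q : Fin (k + 1) × Perm (Fin k) => insertMin q.1 q.2 := by
  refine (Fintype.bijective_iff_injective_and_card _).2 ⟨?_, ?_⟩
  · rintro ⟨p, σ⟩ ⟨p', σ'⟩ h
    dsimp only at h
    obtain rfl : p = p' := (insertMin p' σ').injective <| by
      rw [insertMin_apply_self, ← h, insertMin_apply_self]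
    refine Prod.ext rfl (Equiv.ext fun x => Fin.succ_injective _ ?_)
    rw [← insertMin_apply_succAbove, ← insertMin_apply_succAbove, h]
  · simp [Fintype.card_perm, Nat.factorial_succ]

lemma self_mem_rtlMaxima_insertMin (p : Fin (k + 1)) (σ : Perm (Fin k)) :
    p ∈ rtlMaxima (insertMin p σ) ↔ p = Fin.last k := by
  simp only [rtlMaxima, mem_filter, mem_univ, true_and, insertMin_apply_self,
    Fin.not_lt_zero, imp_false, not_lt]
  exact ⟨fun h => le_antisymm (Fin.le_last p) (h _), fun h w => h ▸ Fin.le_last w⟩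

lemma succAbove_mem_rtlMaxima_insertMin (p : Fin (k + 1)) (σ : Perm (Fin k)) (x : Fin k) :
    p.succAbove x ∈ rtlMaxima (insertMin p σ) ↔ x ∈ rtlMaxima σ := by
  simp only [rtlMaxima, mem_filter, mem_univ, true_and]
  rw [Fin.forall_iff_succAbove p]
  simp [Fin.succ_pos, Fin.succAbove_lt_succAbove_iff]

lemma card_rtlMaxima_insertMin (p : Fin (k + 1)) (σ : Perm (Fin k)) :
    #(rtlMaxima (insertMin p σ)) = #(rtlMaxima σ) + if p = Fin.last k then 1 else 0 := by
  have card_eq_sum {m : ℕ} (t : Finset (Fin m)) : #t = ∑ v, if v ∈ t then 1 else 0 := by simp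
  rw [card_eq_sum, card_eq_sum, Fin.sum_univ_succAbove _ p]
  simp only [self_mem_rtlMaxima_insertMin, succAbove_mem_rtlMaxima_insertMin]
  exact add_comm _ _

theorem sum_pow_sub_card_rtlMaxima {R : Type*} [CommSemiring R] (y : R) :
    ∀ k : ℕ, ∑ ρ : Perm (Fin k), y ^ (k - #(rtlMaxima ρ)) = ∏ i ∈ range k, (1 + i * y)
  | 0 => by simp
  | k + 1 => by
    have hle (σ : Perm (Fin k)) : #(rtlMaxima σ) ≤ k := card_le_univ _ |>.trans_eq (by simp)
    rw [prod_range_succ, ← sum_pow_sub_card_rtlMaxima y k, sum_mul,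
      ← insertMin_bijective.sum_comp, Fintype.sum_prod_type_right]
    refine sum_congr rfl fun σ _ => ?_
    rw [Fin.sum_univ_castSucc]
    simp only [card_rtlMaxima_insertMin, Fin.castSucc_ne_last, if_false, if_true, add_zero]
    rw [show k + 1 - #(rtlMaxima σ) = k - #(rtlMaxima σ) + 1 by have := hle σ; omega,
      show k + 1 - (#(rtlMaxima σ) + 1) = k - #(rtlMaxima σ) by omega]
    simp only [sum_const, card_univ, Fintype.card_fin, nsmul_eq_mul, pow_succ]
    ring

end Equiv.Perm

theorem Nat.doubleFactorial_two_mul_sub_one_eq_prod (k : ℕ) :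
    Nat.doubleFactorial (2 * k - 1) = ∏ i ∈ Finset.range k, (1 + i * 2) := by
  cases k with
  | zero => rfl
  | succ k =>
    rw [show 2 * (k + 1) - 1 = 2 * k + 1 by omega, Nat.doubleFactorial_eq_prod_odd,
      Finset.prod_range_succ', zero_mul, add_zero, mul_one]
    exact Finset.prod_congr rfl fun i _ => by ring

section ParetoFront

open Equiv Perm

variable {n : ℕ}

def paretoFront (a b : Perm (Fin n)) : Finset (Fin n) :=
  {j | ¬ ∃ j', a j < a j' ∧ b j < b j'}

lemma mem_paretoFront_iff (a b : Perm (Fin n)) (j : Fin n) :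
    j ∈ paretoFront a b ↔ a j ∈ rtlMaxima (b * a⁻¹) := by
  simp only [paretoFront, rtlMaxima, mem_filter, mem_univ, true_and, not_exists, not_and,
    not_lt]
  refine Iff.trans ?_ a.forall_congr_right
  refine forall_congr' fun j' => imp_congr_right fun hj' => ?_
  simp only [mul_apply, Perm.inv_def, symm_apply_apply]
  have : j' ≠ j := fun h => (h ▸ hj').false
  rw [le_iff_lt_or_eq, or_iff_left (b.injective.ne this)]

lemma card_paretoFront (a b : Perm (Fin n)) :
    #(paretoFront a b) = #(rtlMaxima (b * a⁻¹)) :=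
  card_equiv a (mem_paretoFront_iff a b)

lemma paretoFront_nonempty (hn : 0 < n) (a b : Perm (Fin n)) : (paretoFront a b).Nonempty := by
  refine ⟨a.symm ⟨n - 1, by omega⟩, ?_⟩
  simp only [paretoFront, mem_filter, mem_univ, true_and, apply_symm_apply, not_exists, not_and]
  intro j' h
  have := (a j').isLt
  simp only [Fin.lt_def] at h
  omega

theorem sum_two_pow_sub_card_paretoFront :
    ∑ a : Perm (Fin n), ∑ b : Perm (Fin n), 2 ^ (n - #(paretoFront a b))
      = Nat.factorial n * Nat.doubleFactorial (2 * n - 1) := by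
  have inner (a : Perm (Fin n)) :
      ∑ b : Perm (Fin n), 2 ^ (n - #(paretoFront a b)) = Nat.doubleFactorial (2 * n - 1) := by
    simp only [card_paretoFront]
    rw [Fintype.sum_equiv (Equiv.mulRight a⁻¹) (fun b => 2 ^ (n - #(rtlMaxima (b * a⁻¹))))
      (fun ρ => 2 ^ (n - #(rtlMaxima ρ))) fun _ => rfl,
      sum_pow_sub_card_rtlMaxima, Nat.doubleFactorial_two_mul_sub_one_eq_prod]
    simp
  simp [inner, Fintype.card_perm]

end ParetoFront

section ConstantOn

variable {ι α : Type*} [Fintype ι] [DecidableEq ι] [Fintype α] [DecidableEq α]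

lemma card_filter_forall_mem_eq (s : Finset ι) (a : α) :
    #{f : ι → α | ∀ i ∈ s, f i = a} = Fintype.card α ^ (Fintype.card ι - #s) := by
  have : ({f : ι → α | ∀ i ∈ s, f i = a} : Finset _) =
      Fintype.piFinset fun i => if i ∈ s then {a} else univ := by
    ext f
    simp only [mem_filter, mem_univ, true_and, Fintype.mem_piFinset]
    refine forall_congr' fun i => ?_
    split_ifs <;> simp [*]
  rw [this, Fintype.card_piFinset]
  simp [apply_ite, prod_ite, filter_not, card_univ_sdiff]

lemma card_filter_card_image_eq_one {s : Finset ι} (hs : s.Nonempty) :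
    #{f : ι → α | #(s.image f) = 1} = Fintype.card α ^ (Fintype.card ι - #s + 1) := by
  have hconst (f : ι → α) : #(s.image f) = 1 ↔ ∃ a, ∀ i ∈ s, f i = a := by
    simp only [card_eq_one, eq_singleton_iff_unique_mem, mem_image, forall_exists_index, and_imp,
      forall_apply_eq_imp_iff₂]
    obtain ⟨i, hi⟩ := hs
    exact exists_congr fun a => and_iff_right_of_imp fun h => ⟨i, hi, h i hi⟩
  have hfibres : ({f : ι → α | #(s.image f) = 1} : Finset _) =
      univ.biUnion fun a => {f : ι → α | ∀ i ∈ s, f i = a} := by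
    ext f
    simp [hconst]
  rw [hfibres, card_biUnion]
  · simp [card_filter_forall_mem_eq, pow_succ']
  · intro a _ b _ hab
    simp only [Function.onFun, disjoint_left, mem_filter, mem_univ, true_and]
    obtain ⟨i, hi⟩ := hs
    exact fun f ha hb => hab ((ha i hi).symm.trans (hb i hi))

end ConstantOn

section Elimination

variable {m n : ℕ} (R C : Fin m → Fin n → ℝ)

lemma survivorsFrom_eq_of_iterate_eq {p q : Finset (Fin m) × Finset (Fin n)} {k : ℕ}
    (hk : k ≤ m + n) (hpq : (elimStep R C)^[k] p = q) (hq : elimStep R C q = q) :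
    survivorsFrom R C p = q := by
  rw [survivorsFrom, ← Nat.sub_add_cancel hk, Function.iterate_add_apply, hpq,
    Function.iterate_fixed hq]

lemma not_rowDomIn_singleton_self (i : Fin m) {Y : Finset (Fin n)} (hY : Y.Nonempty) :
    ¬ RowDomIn R {i} Y i := by
  rintro ⟨i', hi', hlt⟩
  obtain ⟨j, hj⟩ := hY
  rw [mem_singleton.1 hi'] at hlt
  exact (hlt j hj).false

lemma not_colDomIn_singleton_self {X : Finset (Fin m)} (hX : X.Nonempty) (j : Fin n) :
    ¬ ColDomIn C X {j} j := by
  rintro ⟨j', hj', hlt⟩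
  obtain ⟨i, hi⟩ := hX
  rw [mem_singleton.1 hj'] at hlt
  exact (hlt i hi).false

lemma elimStep_singleton_singleton (i : Fin m) (j : Fin n) :
    elimStep R C ({i}, {j}) = ({i}, {j}) := by
  simp only [elimStep, filter_singleton,
    if_pos (not_rowDomIn_singleton_self R i (singleton_nonempty j)),
    if_pos (not_colDomIn_singleton_self C (singleton_nonempty i) j)]

lemma exists_elimStep_singleton_left {i : Fin m} {Y : Finset (Fin n)} (hY : Y.Nonempty)
    (hC : Function.Injective (C i)) : ∃ j, elimStep R C ({i}, Y) = ({i}, {j}) := by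
  obtain ⟨jmax, hjmax, hmax⟩ := exists_max_image Y (C i) hY
  refine ⟨jmax, Prod.ext ?_ ?_⟩
  · simp [elimStep, not_rowDomIn_singleton_self R i hY]
  · ext j
    simp only [elimStep, ColDomIn, mem_filter, mem_singleton, forall_eq, not_exists, not_and,
      not_lt]
    refine ⟨fun ⟨hj, hle⟩ => hC (le_antisymm (hmax j hj) (hle jmax hjmax)), ?_⟩
    rintro rfl
    exact ⟨hjmax, hmax⟩

end Elimination

lemma finset_fin_two_eq_singleton_or_univ :
    ∀ X : Finset (Fin 2), ∀ i ∈ X, X = {i} ∨ X = univ := by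
  decide

section TwoRowGame

open Equiv

variable {n : ℕ} (ω : Omega 2 n)

def winRow (j : Fin n) : Fin 2 := (ω.1 j)⁻¹ 1

def paretoCols : Finset (Fin n) := paretoFront (ω.2 0) (ω.2 1)

lemma RPay_lt_RPay_iff {i i' : Fin 2} {j : Fin n} :
    RPay ω i j < RPay ω i' j ↔ i ≠ winRow ω j ∧ i' = winRow ω j := by
  simp only [RPay, winRow, Nat.cast_lt, Fin.val_fin_lt]
  generalize ω.1 j = τ
  revert τ i i'
  decide

lemma elimStep_univ_fst (Y : Finset (Fin n)) :
    (elimStep (RPay ω) (CPay ω) (univ, Y)).1 = Y.image (winRow ω) := by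
  ext i
  simp only [elimStep, RowDomIn, RPay_lt_RPay_iff, mem_filter, mem_univ, true_and, mem_image,
    not_exists, not_forall]
  have other_row : ∀ i k : Fin 2, ¬(i ≠ k ∧ i + 1 = k) → k = i := by decide
  constructor
  · intro h
    obtain ⟨j, hj, hw⟩ := h (i + 1)
    exact ⟨j, hj, other_row _ _ hw⟩
  · rintro ⟨j, hj, rfl⟩ x
    exact ⟨j, hj, fun h => h.1 rfl⟩

lemma colDomIn_univ_iff {Y : Finset (Fin n)} {j : Fin n} :
    ColDomIn (CPay ω) univ Y j ↔ ∃ j' ∈ Y, ω.2 0 j < ω.2 0 j' ∧ ω.2 1 j < ω.2 1 j' := by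
  simp [ColDomIn, CPay, Fin.forall_fin_two]

lemma elimStep_univ_univ_snd : (elimStep (RPay ω) (CPay ω) (univ, univ)).2 = paretoCols ω := by
  simp [elimStep, colDomIn_univ_iff, paretoCols, paretoFront]

lemma elimStep_univ_paretoCols_snd :
    (elimStep (RPay ω) (CPay ω) (univ, paretoCols ω)).2 = paretoCols ω := by
  classical
  refine filter_true_of_mem fun j hj hdom => ?_
  simp only [paretoCols, paretoFront, mem_filter, mem_univ, true_and] at hj
  obtain ⟨j', -, hj'⟩ := (colDomIn_univ_iff ω).1 hdom
  exact hj ⟨j', hj'⟩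

lemma paretoCols_nonempty (hn : 0 < n) : (paretoCols ω).Nonempty :=
  paretoFront_nonempty hn _ _

lemma CPay_injective (i : Fin 2) : Function.Injective (CPay ω i) := fun j j' h =>
  (ω.2 i).injective <| Fin.ext <| by simpa [CPay] using h

lemma survivors_of_image_winRow_eq_univ (h : (paretoCols ω).image (winRow ω) = univ) :
    survivors (RPay ω) (CPay ω) = (univ, paretoCols ω) := by
  have h1 : elimStep (RPay ω) (CPay ω) (univ, univ) = (univ, paretoCols ω) := by
    refine Prod.ext ?_ (elimStep_univ_univ_snd ω)
    rw [elimStep_univ_fst, ← univ_subset_iff, ← h]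
    exact image_subset_image (subset_univ _)
  have h2 : elimStep (RPay ω) (CPay ω) (univ, paretoCols ω) = (univ, paretoCols ω) :=
    Prod.ext (by rw [elimStep_univ_fst, h]) (elimStep_univ_paretoCols_snd ω)
  exact survivorsFrom_eq_of_iterate_eq _ _ (k := 1) (by omega) h1 h2

lemma exists_survivors_of_image_winRow_eq_singleton (hn : 0 < n) {i : Fin 2}
    (h : (paretoCols ω).image (winRow ω) = {i}) :
    ∃ j, survivors (RPay ω) (CPay ω) = ({i}, {j}) := by
  obtain ⟨j, hj⟩ := exists_elimStep_singleton_left (RPay ω) (CPay ω)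
    (paretoCols_nonempty ω hn) (CPay_injective ω i)
  have hfix := elimStep_singleton_singleton (RPay ω) (CPay ω) i j
  refine ⟨j, ?_⟩
  have hi : i ∈ univ.image (winRow ω) :=
    image_subset_image (subset_univ _) (h ▸ mem_singleton_self i)
  have h1 : elimStep (RPay ω) (CPay ω) (univ, univ) = (univ.image (winRow ω), paretoCols ω) :=
    Prod.ext (elimStep_univ_fst ω univ) (elimStep_univ_univ_snd ω)
  -- whether round 1 already deletes the row that loses every column
  rcases finset_fin_two_eq_singleton_or_univ _ i hi with hrows | hrows
  · rw [hrows] at h1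
    refine survivorsFrom_eq_of_iterate_eq _ _ (k := 2) (by omega) ?_ hfix
    rw [Function.iterate_succ_apply', Function.iterate_one, h1, hj]
  · rw [hrows] at h1
    have h2 : elimStep (RPay ω) (CPay ω) (univ, paretoCols ω) = ({i}, paretoCols ω) :=
      Prod.ext (by rw [elimStep_univ_fst, h]) (elimStep_univ_paretoCols_snd ω)
    refine survivorsFrom_eq_of_iterate_eq _ _ (k := 3) (by omega) ?_ hfix
    rw [Function.iterate_succ_apply', Function.iterate_succ_apply', Function.iterate_one, h1, h2,
      hj]

theorem gameSolvable_iff_card_image_winRow (hn : 0 < n) :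
    GameSolvable ω ↔ #((paretoCols ω).image (winRow ω)) = 1 := by
  change #(survivors (RPay ω) (CPay ω)).1 = 1 ∧ #(survivors (RPay ω) (CPay ω)).2 = 1 ↔ _
  obtain ⟨i, hi⟩ := (paretoCols_nonempty ω hn).image (winRow ω)
  rcases finset_fin_two_eq_singleton_or_univ _ i hi with h | h
  · obtain ⟨j, hj⟩ := exists_survivors_of_image_winRow_eq_singleton ω hn h
    simp [hj, h]
  · simp [survivors_of_image_winRow_eq_univ ω h, h]

theorem gameSolvable_iff (hn : 0 < n) :
    GameSolvable ω ↔ #((paretoCols ω).image ω.1) = 1 := by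
  have hinj : Function.Injective fun τ : Perm (Fin 2) => τ⁻¹ 1 := by decide
  rw [gameSolvable_iff_card_image_winRow ω hn, ← card_image_of_injective _ hinj, image_image]
  rfl

end TwoRowGame

section Probability

open Equiv

variable {n : ℕ}

theorem card_filter_gameSolvable [DecidablePred (GameSolvable (m := 2) (n := n))] (hn : 0 < n) :
    #{ω : Omega 2 n | GameSolvable ω} = 2 * (n.factorial * (2 * n - 1).doubleFactorial) := by
  have fibre (c : Fin 2 → Perm (Fin n)) :
      (∑ r : Fin n → Perm (Fin 2), if #((paretoFront (c 0) (c 1)).image r) = 1 then 1 else 0)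
        = 2 * 2 ^ (n - #(paretoFront (c 0) (c 1))) := by
    rw [← card_filter, card_filter_card_image_eq_one (paretoFront_nonempty hn _ _)]
    simp [Fintype.card_perm, pow_succ']
  rw [filter_congr fun ω _ => gameSolvable_iff ω hn, card_filter, Fintype.sum_prod_type_right]
  refine (Fintype.sum_equiv (piFinTwoEquiv fun _ => Perm (Fin n)) _
    (fun c => 2 * 2 ^ (n - #(paretoFront c.1 c.2))) fibre).trans ?_
  rw [Fintype.sum_prod_type]
  simp only [← mul_sum, sum_two_pow_sub_card_paretoFront]

lemma probSolvable_two (hn : 0 < n) :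
    probSolvable 2 n = (2 * n - 1).doubleFactorial / (2 ^ (n - 1) * n.factorial) := by
  classical
  obtain ⟨k, rfl⟩ := Nat.exists_eq_add_of_le' hn
  rw [probSolvable, Pr, Set.Finite.toFinset_ofPred, card_filter_gameSolvable hn]
  simp [Fintype.card_perm, pow_succ]
  field_simp

end Probability

/-- For every `n ≥ 1`, `π(2,n) = (2n−1)!!/(2^(n−1)·n!)`, which also equals
`2·Γ(n+1/2)/(Γ(1/2)·Γ(n+1))`. -/
theorem stmt2 (n : ℕ) (hn : 1 ≤ n) :
    probSolvable 2 n
      = (Nat.doubleFactorial (2 * n - 1) : ℝ) / (2 ^ (n - 1) * (Nat.factorial n : ℝ)) ∧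
    probSolvable 2 n
      = 2 * Real.Gamma ((n : ℝ) + 1 / 2) / (Real.Gamma (1 / 2) * Real.Gamma ((n : ℝ) + 1)) := by
  refine ⟨probSolvable_two hn, ?_⟩
  obtain ⟨k, rfl⟩ := Nat.exists_eq_add_of_le' hn
  rw [probSolvable_two hn, Real.Gamma_nat_add_half, Real.Gamma_one_half_eq,
    Real.Gamma_nat_eq_factorial, Nat.add_sub_cancel, pow_succ]
  field_simp
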